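/- arXiv:2605.08240 — 3 statements merged into one kernel-verified Lean document; each statement's English description precedes it below -/
import Mathlib

section
/- Let V be a real inner product space of finite dimension at least 2, and let K : V × V → V be an ℝ-bilinear map satisfying K(X,Y) = K(Y,X) and ⟨K(X,Y), Z⟩ = ⟨Y, K(X,Z)⟩ for all X, Y, Z ∈ V. If K(Y,u) = 0 for all Y, u ∈ V with ⟨Y,u⟩ = 0, then K = 0. -/
/-!
If `X ⊥ u` and `‖u‖ = ‖X‖`, then `X + u ⊥ X - u` as well, so expanding `K (X + u) (X - u) = 0`
gives `K X X = K u u`. Hence `⟪K X X, X⟫ = ⟪u, K u X⟫ = 0`, while for `w ⊥ X` we get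
`⟪K X X, w⟫ = ⟪X, K X w⟫ = 0`. So `K X X` is orthogonal to `X` and to every `w ⊥ X`, i.e.
`K X X = 0`, and a symmetric bilinear map vanishing on the diagonal vanishes by polarization.
-/

open scoped RealInnerProductSpace InnerProductSpace

theorem LinearMap.eq_zero_of_isAlt_of_symm {R M N : Type*} [CommSemiring R] [AddCommMonoid M]
    [Module R M] [AddCommGroup N] [Module R N] [IsAddTorsionFree N] {B : M →ₗ[R] M →ₗ[R] N}
    (hB : B.IsAlt) (hsymm : ∀ x y, B x y = B y x) : B = 0 := by
  ext x y
  rw [zero_apply, zero_apply, ← self_eq_neg, hB.neg, hsymm]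

section InnerProductSpace

variable {𝕜 E : Type*} [RCLike 𝕜] [NormedAddCommGroup E] [InnerProductSpace 𝕜 E]

theorem Submodule.orthogonal_span_singleton_ne_bot (hdim : 2 ≤ Module.finrank 𝕜 E) (x : E) :
    (𝕜 ∙ x)ᗮ ≠ ⊥ := by
  rw [Ne, Submodule.orthogonal_eq_bot_iff]
  intro htop
  have hle : Module.finrank 𝕜 (𝕜 ∙ x) ≤ 1 := by
    simpa using finrank_span_le_card ({x} : Set E)
  rw [htop, finrank_top] at hle
  omega

theorem eq_zero_of_inner_eq_zero_of_forall_orthogonal {x v : E} (hx : ⟪x, v⟫_𝕜 = 0)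
    (h : ∀ w, ⟪x, w⟫_𝕜 = 0 → ⟪w, v⟫_𝕜 = 0) : v = 0 := by
  have hv : v ∈ (𝕜 ∙ x)ᗮ := Submodule.mem_orthogonal_singleton_iff_inner_right.mpr hx
  have hv' : v ∈ (𝕜 ∙ x)ᗮᗮ := fun w hw =>
    h w (Submodule.mem_orthogonal_singleton_iff_inner_right.mp hw)
  exact Submodule.disjoint_def.mp (Submodule.orthogonal_disjoint _) v hv hv'

end InnerProductSpace

theorem exists_inner_eq_zero_norm_eq {V : Type*} [NormedAddCommGroup V] [InnerProductSpace ℝ V]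
    (hdim : 2 ≤ Module.finrank ℝ V) (X : V) : ∃ u : V, ⟪X, u⟫ = 0 ∧ ‖u‖ = ‖X‖ := by
  have : Nontrivial (ℝ ∙ X)ᗮ :=
    Submodule.nontrivial_iff_ne_bot.mpr (Submodule.orthogonal_span_singleton_ne_bot hdim X)
  obtain ⟨⟨u, hu⟩, hnorm⟩ := exists_norm_eq (ℝ ∙ X)ᗮ (norm_nonneg X)
  exact ⟨u, Submodule.mem_orthogonal_singleton_iff_inner_right.mp hu, hnorm⟩

theorem LinearMap.isAlt_of_apply_eq_zero_of_inner_eq_zero {V : Type*} [NormedAddCommGroup V]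
    [InnerProductSpace ℝ V] {K : V →ₗ[ℝ] V →ₗ[ℝ] V} (hdim : 2 ≤ Module.finrank ℝ V)
    (hsymm : ∀ X Y : V, K X Y = K Y X) (hadj : ∀ X Y Z : V, ⟪K X Y, Z⟫ = ⟪Y, K X Z⟫)
    (h : ∀ Y u : V, ⟪Y, u⟫ = 0 → K Y u = 0) : K.IsAlt := by
  intro X
  obtain ⟨u, hXu, hnorm⟩ := exists_inner_eq_zero_norm_eq hdim X
  have hKXu : K X u = 0 := h X u hXu
  have hKuX : K u X = 0 := hsymm u X ▸ hKXu
  have hKXX : K X X = K u u := by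
    have hsum := h (X + u) (X - u) ((real_inner_add_sub_eq_zero_iff X u).mpr hnorm.symm)
    simp only [map_add, map_sub, LinearMap.add_apply, hKXu, hKuX] at hsum
    simpa [sub_eq_zero] using hsum
  refine eq_zero_of_inner_eq_zero_of_forall_orthogonal (𝕜 := ℝ) (x := X) ?_ fun w hw => ?_
  · rw [real_inner_comm, hKXX, hadj, hKuX, inner_zero_right]
  · rw [real_inner_comm, hadj, h X w hw, inner_zero_right]

theorem stmt_2_general
    {V : Type*} [NormedAddCommGroup V] [InnerProductSpace ℝ V]
    (hdim : 2 ≤ Module.finrank ℝ V)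
    (K : V →ₗ[ℝ] V →ₗ[ℝ] V)
    (hsymm : ∀ X Y : V, K X Y = K Y X)
    (hadj : ∀ X Y Z : V, ⟪K X Y, Z⟫ = ⟪Y, K X Z⟫)
    (h : ∀ Y u : V, ⟪Y, u⟫ = 0 → K Y u = 0) :
    K = 0 :=
  have : IsAddTorsionFree V := .of_isTorsionFree ℝ V
  LinearMap.eq_zero_of_isAlt_of_symm
    (LinearMap.isAlt_of_apply_eq_zero_of_inner_eq_zero hdim hsymm hadj h) hsymm

/-- If `V` is a real inner product space of dimension at least 2 and
`K` is a symmetric bilinear map with values in `V` satisfying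
`⟪K X Y, Z⟫ = ⟪Y, K X Z⟫`, and `K Y u = 0` whenever `⟪Y, u⟫ = 0`, then `K = 0`. -/
theorem stmt_2
    {V : Type*} [NormedAddCommGroup V] [InnerProductSpace ℝ V] [FiniteDimensional ℝ V]
    (hdim : 2 ≤ Module.finrank ℝ V)
    (K : V →ₗ[ℝ] V →ₗ[ℝ] V)
    (hsymm : ∀ X Y : V, K X Y = K Y X)
    (hadj : ∀ X Y Z : V, ⟪K X Y, Z⟫ = ⟪Y, K X Z⟫)
    (h : ∀ Y u : V, ⟪Y, u⟫ = 0 → K Y u = 0) :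
    K = 0 :=
  stmt_2_general hdim K hsymm hadj h
end

section
/- Let V be a real inner product space of finite dimension n ≥ 1, let K : V × V → V be an ℝ-bilinear map satisfying K(X,Y) = K(Y,X) and ⟨K(X,Y), Z⟩ = ⟨Y, K(X,Z)⟩ for all X, Y, Z ∈ V, and let p, q ∈ ℝ. Suppose that for every u ∈ V, the trace of the linear endomorphism Y ↦ K(u,Y) of V equals ((n·p − (1 + ‖u‖²)·q)/(2·(1 + ‖u‖²)))·⟨K(u,u), u⟩. Then either p = 0 and q = 0, or K = 0. -/
open scoped RealInnerProductSpace

/-!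
Along a ray `t • u` the trace of `K (t • u)` and the cubic form `⟪K u u, u⟫` scale like `t` and
`t³`, so clearing the denominator `2 (1 + t² ‖u‖²)` turns the hypothesis into an odd quintic in
`t` that vanishes identically. Its `t⁵`-coefficient is `q ‖u‖² ⟪K u u, u⟫` and, once `q = 0`, its
`t³`-coefficient is `n p ⟪K u u, u⟫`; so `p = q = 0` unless the cubic form vanishes identically.
In that case `K = 0`, because symmetry and self-adjointness make `⟪K x y, z⟫` a totally
symmetric trilinear form, which is recovered from its diagonal by polarization.
-/

theorem eq_zero_of_odd_quintic_eq_zero {a b c : ℝ}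
    (h : ∀ t : ℝ, a * t + b * t ^ 3 + c * t ^ 5 = 0) : a = 0 ∧ b = 0 ∧ c = 0 := by
  have h1 := h 1
  have h2 := h 2
  have h3 := h 3
  norm_num at h1 h2 h3
  exact ⟨by linarith, by linarith, by linarith⟩

section SymmetricTrilinear

variable {V : Type*} [NormedAddCommGroup V] [InnerProductSpace ℝ V] {K : V →ₗ[ℝ] V →ₗ[ℝ] V}

theorem inner_apply_apply_comm_of_adjoint (hadj : ∀ X Y Z : V, ⟪K X Y, Z⟫ = ⟪Y, K X Z⟫)
    (x y z : V) : ⟪K x y, z⟫ = ⟪K x z, y⟫ := by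
  rw [hadj, real_inner_comm]

theorem inner_apply_add_add_add (hsymm : ∀ X Y : V, K X Y = K Y X)
    (hadj : ∀ X Y Z : V, ⟪K X Y, Z⟫ = ⟪Y, K X Z⟫) (x y : V) :
    ⟪K (x + y) (x + y), x + y⟫ =
      ⟪K x x, x⟫ + 3 * ⟪K x x, y⟫ + 3 * ⟪K y y, x⟫ + ⟪K y y, y⟫ := by
  have hxyx : ⟪K x y, x⟫ = ⟪K x x, y⟫ := inner_apply_apply_comm_of_adjoint hadj x y x
  have hxyy : ⟪K x y, y⟫ = ⟪K y y, x⟫ := by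
    rw [hsymm, inner_apply_apply_comm_of_adjoint hadj]
  simp only [map_add, LinearMap.add_apply, inner_add_left, inner_add_right, hsymm y x, hxyx,
    hxyy]
  ring

theorem eq_zero_of_inner_apply_self_self (hsymm : ∀ X Y : V, K X Y = K Y X)
    (hadj : ∀ X Y Z : V, ⟪K X Y, Z⟫ = ⟪Y, K X Z⟫) (hK : ∀ u : V, ⟪K u u, u⟫ = 0) : K = 0 := by
  have hsq : ∀ x y : V, ⟪K x x, y⟫ = 0 := by
    intro x y
    have hplus := inner_apply_add_add_add hsymm hadj x y
    have hminus := inner_apply_add_add_add hsymm hadj x (-y)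
    simp only [map_neg, LinearMap.neg_apply, neg_neg, inner_neg_right,
      ← sub_eq_add_neg, hK] at hplus hminus
    linarith
  have hmixed : ∀ x y z : V, ⟪K x y, z⟫ = 0 := by
    intro x y z
    have h := hsq (x + y) z
    simp only [map_add, LinearMap.add_apply, inner_add_left, hsymm y x, hsq] at h
    linarith
  ext x y
  exact inner_self_eq_zero.mp (hmixed x y (K x y))

end SymmetricTrilinear

/-- If the trace of `Y ↦ K u Y` equals
`((n p − (1+‖u‖²) q)/(2(1+‖u‖²))) ⟪K u u, u⟫` for every `u` (the incompressibility
condition for the geodesic flow of `g_{p,q}`), then either `p = q = 0` or `K = 0`. -/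
theorem stmt_14
    {V : Type*} [NormedAddCommGroup V] [InnerProductSpace ℝ V] [FiniteDimensional ℝ V]
    (hn : 1 ≤ Module.finrank ℝ V)
    (K : V →ₗ[ℝ] V →ₗ[ℝ] V)
    (hsymm : ∀ X Y : V, K X Y = K Y X)
    (hadj : ∀ X Y Z : V, ⟪K X Y, Z⟫ = ⟪Y, K X Z⟫)
    (p q : ℝ)
    (h : ∀ u : V, LinearMap.trace ℝ V (K u) =
      (((Module.finrank ℝ V : ℝ) * p - (1 + ‖u‖ ^ 2) * q) / (2 * (1 + ‖u‖ ^ 2)))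
        * ⟪K u u, u⟫) :
    (p = 0 ∧ q = 0) ∨ K = 0 := by
  by_cases hK : ∀ u : V, ⟪K u u, u⟫ = 0
  · exact Or.inr (eq_zero_of_inner_apply_self_self hsymm hadj hK)
  push Not at hK
  obtain ⟨u, hu⟩ := hK
  set n : ℝ := (Module.finrank ℝ V : ℝ)
  set a := LinearMap.trace ℝ V (K u)
  set F := ⟪K u u, u⟫
  have hs : 0 < ‖u‖ ^ 2 := by
    have : u ≠ 0 := by rintro rfl; simp [F] at hu
    positivity
  have hquintic : ∀ t : ℝ, (2 * a) * t + (2 * a * ‖u‖ ^ 2 - (n * p - q) * F) * t ^ 3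
      + (q * ‖u‖ ^ 2 * F) * t ^ 5 = 0 := by
    intro t
    have ht := h (t • u)
    simp only [map_smul, LinearMap.smul_apply, inner_smul_left, inner_smul_right, norm_smul,
      mul_pow, Real.norm_eq_abs, sq_abs, RCLike.conj_to_real] at ht
    field_simp at ht
    linear_combination ht
  obtain ⟨hlinear, hcubic, hquint⟩ := eq_zero_of_odd_quintic_eq_zero hquintic
  have hq : q = 0 := by simpa [hs.ne', hu] using hquint
  have ha : a = 0 := by linarith
  have hp : n * p = 0 := by simpa [hu, ha, hq] using hcubic
  exact Or.inl ⟨by simpa [n, show Module.finrank ℝ V ≠ 0 by omega] using hp, hq⟩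
end

section
/- Let V be a real inner product space of finite dimension at least 2, let K : V × V → V be an ℝ-bilinear map satisfying K(X,Y) = K(Y,X) and ⟨K(X,Y), Z⟩ = ⟨Y, K(X,Z)⟩ for all X, Y, Z ∈ V, and let p, q ∈ ℝ. Write α(u) = 1 + ‖u‖². Then the identity −(p/α(u)^{p+1})·(⟨X,Y⟩ + q·⟨X,u⟩·⟨Y,u⟩)·K(u,u) + (q/α(u)^{p})·(⟨X,u⟩·K(Y,u) + ⟨Y,u⟩·K(X,u)) = 0 holds for all u, X, Y ∈ V if and only if either (p = 0 and q = 0) or K = 0. -/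
open scoped RealInnerProductSpace

lemma exists_unit_orthogonal
    {V : Type*} [NormedAddCommGroup V] [InnerProductSpace ℝ V] [FiniteDimensional ℝ V]
    (hdim : 2 ≤ Module.finrank ℝ V) (u : V) :
    ∃ X : V, ⟪X, u⟫ = 0 ∧ ⟪X, X⟫ = 1 := by
  have h1 : Module.finrank ℝ (ℝ ∙ u) ≤ 1 := by
    by_cases hu : u = 0
    · rw [hu, Submodule.span_zero_singleton]
      simp
    · simp [finrank_span_singleton hu]
  have h2 := Submodule.finrank_add_finrank_orthogonal (𝕜 := ℝ) (ℝ ∙ u)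
  have hne : (ℝ ∙ u)ᗮ ≠ ⊥ := by
    intro hbot
    rw [hbot] at h2
    simp at h2
    omega
  obtain ⟨w, hw, hw0⟩ := Submodule.exists_mem_ne_zero_of_ne_bot hne
  have hwu : ⟪w, u⟫ = 0 := by
    have := (Submodule.mem_orthogonal (ℝ ∙ u) w).mp hw u
      (Submodule.mem_span_singleton_self u)
    rwa [real_inner_comm] at this
  have hnw : ‖w‖ ≠ 0 := norm_ne_zero_iff.mpr hw0
  refine ⟨‖w‖⁻¹ • w, ?_, ?_⟩
  · rw [real_inner_smul_left, hwu, mul_zero]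
  · rw [real_inner_smul_left, real_inner_smul_right, real_inner_self_eq_norm_sq]
    field_simp

/-- The fibers of `(TM, g_{p,q})` are totally geodesic iff
`p = q = 0` or `K = 0`: the identity
`−(p/α(u)^{p+1})(⟪X,Y⟫ + q⟪X,u⟫⟪Y,u⟫) K(u,u) + (q/α(u)^p)(⟪X,u⟫ K(Y,u) + ⟪Y,u⟫ K(X,u)) = 0`
holds for all `u, X, Y` iff `p = q = 0` or `K = 0`, where `α(u) = 1 + ‖u‖²`. -/
theorem stmt_15
    {V : Type*} [NormedAddCommGroup V] [InnerProductSpace ℝ V] [FiniteDimensional ℝ V]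
    (hdim : 2 ≤ Module.finrank ℝ V)
    (K : V →ₗ[ℝ] V →ₗ[ℝ] V)
    (hsymm : ∀ X Y : V, K X Y = K Y X)
    (hadj : ∀ X Y Z : V, ⟪K X Y, Z⟫ = ⟪Y, K X Z⟫)
    (p q : ℝ) :
    (∀ u X Y : V,
      (-(p / (1 + ‖u‖ ^ 2) ^ (p + 1)) * (⟪X, Y⟫ + q * ⟪X, u⟫ * ⟪Y, u⟫)) • K u u
        + (q / (1 + ‖u‖ ^ 2) ^ p) • (⟪X, u⟫ • K Y u + ⟪Y, u⟫ • K X u) = 0)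
      ↔ ((p = 0 ∧ q = 0) ∨ K = 0) := by
  have hα : ∀ u : V, (0:ℝ) < 1 + ‖u‖ ^ 2 := fun u => by positivity
  constructor
  · intro h
    by_cases hpq : p = 0 ∧ q = 0
    · exact Or.inl hpq
    · right
      have hKuu : ∀ u : V, K u u = 0 := by
        intro u
        by_cases hp : p = 0
        · have hq : q ≠ 0 := fun hq => hpq ⟨hp, hq⟩
          by_cases hu : u = 0
          · simp [hu]
          · have hid := h u u u
            rw [hp, real_inner_self_eq_norm_sq, Real.rpow_zero] at hid
            simp only [zero_div, neg_zero, zero_mul, zero_smul, zero_add, div_one,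
              smul_smul, ← add_smul] at hid
            have hn : ‖u‖ ≠ 0 := norm_ne_zero_iff.mpr hu
            have hc : q * (‖u‖ ^ 2 + ‖u‖ ^ 2) ≠ 0 := by
              have hupos : (0:ℝ) < ‖u‖ := norm_pos_iff.mpr hu
              have : (0:ℝ) < ‖u‖ ^ 2 + ‖u‖ ^ 2 := by positivity
              exact mul_ne_zero hq (ne_of_gt this)
            exact (smul_eq_zero.mp hid).resolve_left hc
        · obtain ⟨X, hXu, hXX⟩ := exists_unit_orthogonal hdim u
          have hid := h u X X
          rw [hXu, hXX] at hid
          simp only [mul_zero, zero_mul, add_zero, mul_one, zero_smul, smul_zero] at hid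
          have hc : -(p / (1 + ‖u‖ ^ 2) ^ (p + 1)) ≠ 0 := by
            simpa using div_ne_zero hp (ne_of_gt (Real.rpow_pos_of_pos (hα u) _))
          exact (smul_eq_zero.mp hid).resolve_left hc
      ext X Y
      have h1 := hKuu (X + Y)
      simp only [map_add, LinearMap.add_apply] at h1
      rw [hKuu X, hKuu Y, hsymm Y X] at h1
      have h2 : K X Y + K X Y = 0 := by simpa using h1
      have h3 : (2:ℝ) • K X Y = 0 := by rw [two_smul]; exact h2
      have h4 := (smul_eq_zero.mp h3).resolve_left two_ne_zero
      simpa using h4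
  · rintro (⟨hp, hq⟩ | hK)
    · intro u X Y
      simp [hp, hq]
    · intro u X Y
      simp [hK]
end
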